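/- arXiv:0801.3639 — 2 statements merged into one kernel-verified Lean document; each statement's English description precedes it below -/
import Mathlib

section
/- Let R be a linearly ordered commutative ring in which there is no element x with 0 < x < 1, and let k ≥ 1 be a natural number. Let n, m_0, …, m_k, p be elements of R, all ≥ 0, such that for each i with 0 ≤ i ≤ k there exist elements a ≥ 0 and b ≥ 0 of R with m_i · a = (n + i) · b + 1 (where i denotes the image of the natural number i in R), and such that m_i ≤ n + i for all i. Then ∑_{i=0}^{k} ( m_i · ∏_{0 ≤ j ≤ k, j ≠ i} (n + j) ) ≠ p · ∏_{j=0}^{k} (n + j). -/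
/-!
If the equality held, `n` would divide `m 0 * ∏_{j ≠ 0} (n + j)`, hence `∏_{j ≠ 0} (n + j)`
because `m 0` is invertible modulo `n`; that product is `k!` modulo `n`, so `0 < n ≤ k!`.
In a discretely ordered ring every element of `[0, N]` is a natural number, so `n` and all
`m i ≤ n + i` are natural numbers and the equality becomes the divisibility
`∏ (n + j) ∣ ∑ m i * ∏_{j ≠ i} (n + j)` in `ℕ`, with `m i` coprime to `n + i`. This fails
2-adically: exactly one `n + I` in the window has the maximal 2-adic valuation, which is
positive, so `2 ^ (e + 1)`, where `2 ^ e` exactly divides `∏_{j ≠ I} (n + j)`, divides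
every term except the `I`-th one.
-/

open Finset
open scoped Nat

theorem dvd_prod_add_sub_prod {R ι : Type*} [CommRing R] (x : R) (s : Finset ι) (f : ι → R) :
    x ∣ ∏ j ∈ s, (x + f j) - ∏ j ∈ s, f j := by
  have := Polynomial.sub_dvd_eval_sub x 0 (∏ j ∈ s, (Polynomial.X + Polynomial.C (f j)))
  rw [Polynomial.eval_prod, Polynomial.eval_prod] at this
  simpa only [Polynomial.eval_add, Polynomial.eval_X, Polynomial.eval_C, zero_add, sub_zero]
    using this

theorem dvd_of_dvd_sum_of_dvd_of_ne {R ι : Type*} [CommRing R] [DecidableEq ι] {s : Finset ι}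
    {f : ι → R} {d : R} {i : ι} (hi : i ∈ s) (hsum : d ∣ ∑ j ∈ s, f j)
    (hrest : ∀ j ∈ s, j ≠ i → d ∣ f j) : d ∣ f i := by
  rw [← add_sum_erase s f hi] at hsum
  exact (dvd_add_left (dvd_sum fun j hj => hrest j (mem_of_mem_erase hj) (ne_of_mem_erase hj))).mp
    hsum

theorem dvd_factorial_of_sum_mul_prod_erase_eq {R : Type*} [CommRing R] {n p : R} {m : ℕ → R}
    {k : ℕ} (hcop : IsCoprime n (m 0))
    (heq : ∑ i ∈ range (k + 1), m i * ∏ j ∈ (range (k + 1)).erase i, (n + (j : R))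
      = p * ∏ j ∈ range (k + 1), (n + (j : R))) :
    n ∣ (k ! : R) := by
  have h0 : 0 ∈ range (k + 1) := by simp
  have hn_dvd {s : Finset ℕ} (hs : 0 ∈ s) : n ∣ ∏ j ∈ s, (n + (j : R)) := by
    simpa using dvd_prod_of_mem (fun j : ℕ => n + (j : R)) hs
  have hm0 : n ∣ m 0 * ∏ j ∈ (range (k + 1)).erase 0, (n + (j : R)) :=
    dvd_of_dvd_sum_of_dvd_of_ne
      (f := fun i => m i * ∏ j ∈ (range (k + 1)).erase i, (n + (j : R))) h0
      (heq ▸ (hn_dvd h0).mul_left p) fun i _ hi0 =>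
      (hn_dvd (mem_erase.mpr ⟨hi0.symm, h0⟩)).mul_left _
  have hP0 : ∏ j ∈ (range (k + 1)).erase 0, (n + (j : R))
      = ∏ j ∈ range k, (n + ((j + 1 : ℕ) : R)) := by
    rw [range_add_one', erase_insert (by simp), prod_map]
    rfl
  have hP0_sub := dvd_prod_add_sub_prod n (range k) fun j => ((j + 1 : ℕ) : R)
  rw [← hP0, ← Nat.cast_prod, prod_range_add_one_eq_factorial] at hP0_sub
  exact (dvd_sub_right (hcop.dvd_of_dvd_mul_left hm0)).mp hP0_sub

theorem one_le_of_pos_of_discrete {R : Type*} [Zero R] [One R] [LinearOrder R]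
    (hdisc : ¬ ∃ x : R, 0 < x ∧ x < 1) {x : R} (hx : 0 < x) : 1 ≤ x :=
  not_lt.mp fun h => hdisc ⟨x, hx, h⟩

section DiscretelyOrderedRing

variable {R : Type*} [CommRing R] [LinearOrder R] [IsStrictOrderedRing R]

theorem le_of_dvd_of_discrete (hdisc : ¬ ∃ x : R, 0 < x ∧ x < 1) {a b : R} (hb : 0 < b)
    (h : a ∣ b) : a ≤ b := by
  obtain ⟨c, rfl⟩ := h
  rcases le_or_gt a 0 with ha | ha
  · exact ha.trans hb.le
  · have hc : 1 ≤ c := one_le_of_pos_of_discrete hdisc (pos_of_mul_pos_right hb ha.le)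
    nlinarith

theorem exists_nat_eq_of_le_natCast (hdisc : ¬ ∃ x : R, 0 < x ∧ x < 1) (N : ℕ) {x : R}
    (h0 : 0 ≤ x) (hN : x ≤ N) : ∃ m : ℕ, x = m := by
  induction N generalizing x with
  | zero => exact ⟨0, by simpa using le_antisymm (by simpa using hN) h0⟩
  | succ N ih =>
    by_cases hxN : x ≤ N
    · exact ih h0 hxN
    · have := one_le_of_pos_of_discrete hdisc (sub_pos.mpr (not_le.mp hxN))
      exact ⟨N + 1, by push_cast at hN ⊢; linarith⟩

theorem Nat.dvd_of_natCast_dvd_natCast (hdisc : ¬ ∃ x : R, 0 < x ∧ x < 1) {a b : ℕ}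
    (h : (a : R) ∣ b) : a ∣ b := by
  rcases Nat.eq_zero_or_pos b with rfl | hb
  · exact dvd_zero a
  obtain ⟨c, hc⟩ := h
  have hbR : (0 : R) < b := by exact_mod_cast hb
  have hc0 : 0 < c := pos_of_mul_pos_right (hc ▸ hbR) (Nat.cast_nonneg a)
  obtain ⟨c, rfl⟩ := exists_nat_eq_of_le_natCast hdisc b hc0.le
    (le_of_dvd_of_discrete hdisc hbR ⟨a, hc.trans (mul_comm _ _)⟩)
  exact ⟨c, by exact_mod_cast hc⟩

theorem Nat.Coprime.of_isCoprime_natCast (hdisc : ¬ ∃ x : R, 0 < x ∧ x < 1) {a b : ℕ}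
    (h : IsCoprime (a : R) b) : Nat.Coprime a b := by
  have hunit := h.isUnit_of_dvd' (Nat.cast_dvd_cast (a.gcd_dvd_left b))
    (Nat.cast_dvd_cast (a.gcd_dvd_right b))
  exact Nat.dvd_one.mp (Nat.dvd_of_natCast_dvd_natCast hdisc (by simpa using hunit.dvd))

end DiscretelyOrderedRing

theorem exists_two_pow_succ_dvd_of_lt {a b v : ℕ} (hab : a < b) (ha : 2 ^ v ∣ a)
    (hb : 2 ^ v ∣ b) : ∃ c, a ≤ c ∧ c ≤ b ∧ 2 ^ (v + 1) ∣ c := by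
  obtain ⟨x, rfl⟩ := ha
  obtain ⟨y, rfl⟩ := hb
  have hxy : x < y := Nat.lt_of_mul_lt_mul_left hab
  rcases Nat.even_or_odd x with ⟨t, rfl⟩ | ⟨t, rfl⟩
  · exact ⟨2 ^ v * (t + t), le_rfl, hab.le, ⟨t, by ring⟩⟩
  · refine ⟨2 ^ v * (2 * t + 1 + 1), by gcongr; omega, by gcongr; omega, ⟨t + 1, by ring⟩⟩

theorem exists_factorization_two_strict_max {n : ℕ} (hn : 0 < n) {k : ℕ} (hk : 1 ≤ k) :
    ∃ I ∈ range (k + 1), 1 ≤ (n + I).factorization 2 ∧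
      ∀ j ∈ range (k + 1), j ≠ I → (n + j).factorization 2 < (n + I).factorization 2 := by
  have two_pow_dvd_iff (j v : ℕ) : 2 ^ v ∣ n + j ↔ v ≤ (n + j).factorization 2 :=
    Nat.prime_two.pow_dvd_iff_le_factorization (by omega)
  obtain ⟨I, hI, hmax⟩ := (range (k + 1)).exists_max_image (fun j => (n + j).factorization 2)
    ⟨0, by simp⟩
  refine ⟨I, hI, ?_, fun j hj hjI => (hmax j hj).lt_of_ne fun hjv => ?_⟩
  · obtain ⟨j, hj, heven⟩ : ∃ j ∈ range (k + 1), 2 ∣ n + j := by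
      rcases Nat.even_or_odd n with hn2 | hn2
      · exact ⟨0, by simp, by simpa using hn2.two_dvd⟩
      · exact ⟨1, by simp; omega, hn2.add_one.two_dvd⟩
    exact ((two_pow_dvd_iff j 1).mp (by simpa using heven)).trans (hmax j hj)
  have no_two_maxima : ∀ i ∈ range (k + 1), ∀ i' ∈ range (k + 1), i < i' →
      (n + i).factorization 2 = (n + I).factorization 2 →
      (n + i').factorization 2 = (n + I).factorization 2 → False := by
    intro i hi i' hi' hii' hv hv'
    obtain ⟨c, hic, hci', hdvd⟩ := exists_two_pow_succ_dvd_of_lt (by omega : n + i < n + i')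
      ((two_pow_dvd_iff i _).mpr hv.ge) ((two_pow_dvd_iff i' _).mpr hv'.ge)
    obtain ⟨l, rfl⟩ : ∃ l, c = n + l := ⟨c - n, by omega⟩
    have := hmax l (by simp at hi' ⊢; omega)
    have := (two_pow_dvd_iff l _).mp hdvd
    omega
  rcases lt_or_gt_of_ne hjI with h | h
  · exact no_two_maxima j hj I hI h hjv rfl
  · exact no_two_maxima I hI j hj h rfl hjv

theorem not_prod_dvd_sum_mul_prod_erase {n : ℕ} (hn : 0 < n) {k : ℕ} (hk : 1 ≤ k) (m : ℕ → ℕ)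
    (hcop : ∀ i ∈ range (k + 1), Nat.Coprime (m i) (n + i)) :
    ¬ ∏ j ∈ range (k + 1), (n + j) ∣
      ∑ i ∈ range (k + 1), m i * ∏ j ∈ (range (k + 1)).erase i, (n + j) := by
  intro hdvd
  obtain ⟨I, hI, hvI, hmax⟩ := exists_factorization_two_strict_max hn hk
  have hprod_ne (s : Finset ℕ) : ∏ j ∈ s, (n + j) ≠ 0 := prod_ne_zero_iff.mpr fun j _ => by omega
  have hfac (j : ℕ) (hj : j ∈ range (k + 1)) : (∏ l ∈ range (k + 1), (n + l)).factorization 2 =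
      (n + j).factorization 2 + (∏ l ∈ (range (k + 1)).erase j, (n + l)).factorization 2 := by
    rw [← mul_prod_erase _ _ hj, Nat.factorization_mul (by omega) (hprod_ne _)]
    rfl
  set e := (∏ l ∈ (range (k + 1)).erase I, (n + l)).factorization 2
  have two_pow_dvd_iff {x : ℕ} (hx : x ≠ 0) : 2 ^ (e + 1) ∣ x ↔ e + 1 ≤ x.factorization 2 :=
    Nat.prime_two.pow_dvd_iff_le_factorization hx
  have hmI_odd : ¬ 2 ∣ m I := fun h2 => by
    have h2I : 2 ∣ n + I := (Nat.prime_two.dvd_iff_one_le_factorization (by omega)).mpr hvI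
    exact absurd (((hcop I hI).coprime_dvd_left h2).eq_one_of_dvd h2I) (by norm_num)
  have hmI_ne : m I ≠ 0 := by rintro h; simp [h] at hmI_odd
  have hrest : 2 ^ (e + 1) ∣ ∑ j ∈ (range (k + 1)).erase I,
      m j * ∏ l ∈ (range (k + 1)).erase j, (n + l) := by
    refine dvd_sum fun j hj => Dvd.dvd.mul_left ((two_pow_dvd_iff (hprod_ne _)).mpr ?_) _
    have := hfac j (mem_of_mem_erase hj)
    have := hfac I hI
    have := hmax j (mem_of_mem_erase hj) (ne_of_mem_erase hj)
    omega
  have hall : 2 ^ (e + 1) ∣ ∑ i ∈ range (k + 1), m i * ∏ j ∈ (range (k + 1)).erase i, (n + j) :=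
    dvd_trans ((two_pow_dvd_iff (hprod_ne _)).mpr (by have := hfac I hI; omega)) hdvd
  rw [← add_sum_erase _ _ hI, Nat.dvd_add_left hrest,
    two_pow_dvd_iff (mul_ne_zero hmI_ne (hprod_ne _)),
    Nat.factorization_mul hmI_ne (hprod_ne _)] at hall
  simp [Nat.factorization_eq_zero_of_not_dvd hmI_odd, e] at hall

theorem phi_k_in_discretely_ordered_ring_general
    {R : Type*} [CommRing R] [LinearOrder R] [IsStrictOrderedRing R]
    (hdisc : ¬ ∃ x : R, 0 < x ∧ x < 1)
    (k : ℕ) (hk : 1 ≤ k)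
    (n : R) (m : ℕ → R) (p : R)
    (hn : 0 ≤ n)
    (hinv : ∀ i ≤ k, ∃ a b : R, 0 ≤ a ∧ 0 ≤ b ∧ m i * a = (n + (i : R)) * b + 1)
    (hle : ∀ i ≤ k, m i ≤ n + (i : R)) :
    ∑ i ∈ Finset.range (k + 1),
        m i * ∏ j ∈ (Finset.range (k + 1)).erase i, (n + (j : R))
      ≠ p * ∏ j ∈ Finset.range (k + 1), (n + (j : R)) := by
  intro heq
  have hcop : ∀ i ≤ k, IsCoprime (m i) (n + i) := fun i hi => by
    obtain ⟨a, b, -, -, hab⟩ := hinv i hi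
    exact ⟨a, -b, by linear_combination hab⟩
  have hm_pos : ∀ i ≤ k, 0 < m i := fun i hi => by
    obtain ⟨a, b, ha, hb, hab⟩ := hinv i hi
    exact pos_of_mul_pos_left (hab ▸ by positivity) ha
  have hn_pos : 0 < n := (hm_pos 0 k.zero_le).trans_le (by simpa using hle 0 k.zero_le)
  obtain ⟨n, rfl⟩ := exists_nat_eq_of_le_natCast hdisc k ! hn <|
    le_of_dvd_of_discrete hdisc (by positivity)
      (dvd_factorial_of_sum_mul_prod_erase_eq (by simpa using (hcop 0 k.zero_le).symm) heq)
  have hm_nat : ∀ i ∈ range (k + 1), ∃ μ : ℕ, m i = μ := fun i hi =>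
    exists_nat_eq_of_le_natCast hdisc (n + i) (hm_pos i (mem_range_succ_iff.mp hi)).le
      (by exact_mod_cast hle i (mem_range_succ_iff.mp hi))
  choose! μ hμ using hm_nat
  refine not_prod_dvd_sum_mul_prod_erase (by exact_mod_cast hn_pos) hk μ
    (fun i hi => Nat.Coprime.of_isCoprime_natCast hdisc ?_)
    (Nat.dvd_of_natCast_dvd_natCast hdisc ⟨p, ?_⟩)
  · exact_mod_cast hμ i hi ▸ hcop i (mem_range_succ_iff.mp hi)
  · push_cast
    rw [mul_comm, ← heq]
    exact sum_congr rfl fun i hi => by rw [hμ i hi]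

theorem phi_k_in_discretely_ordered_ring
    {R : Type*} [CommRing R] [LinearOrder R] [IsStrictOrderedRing R]
    (hdisc : ¬ ∃ x : R, 0 < x ∧ x < 1)
    (k : ℕ) (hk : 1 ≤ k)
    (n : R) (m : ℕ → R) (p : R)
    (hn : 0 ≤ n) (hp : 0 ≤ p) (hm : ∀ i ≤ k, 0 ≤ m i)
    (hinv : ∀ i ≤ k, ∃ a b : R, 0 ≤ a ∧ 0 ≤ b ∧ m i * a = (n + (i : R)) * b + 1)
    (hle : ∀ i ≤ k, m i ≤ n + (i : R)) :
    ∑ i ∈ Finset.range (k + 1),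
        m i * ∏ j ∈ (Finset.range (k + 1)).erase i, (n + (j : R))
      ≠ p * ∏ j ∈ Finset.range (k + 1), (n + (j : R)) :=
  phi_k_in_discretely_ordered_ring_general hdisc k hk n m p hn hinv hle
end

section
/- Let R be a linearly ordered commutative ring in which there is no element x with 0 < x < 1, and let k ≥ 1 be a natural number. Let m, n, p be elements of R with m > 0, n > 0, and p ≥ 0. Then ∑_{i=0}^{k} ∏_{0 ≤ j ≤ k, j ≠ i} (m + j·n) ≠ p · ∏_{j=0}^{k} (m + j·n), where j denotes the image of the natural number j in R. -/
/-!
Write `S = ∑ᵢ ∏_{j ≠ i} (m + j n)` and `P = ∏ⱼ (m + j n)`, so that `S / P = ∑ⱼ 1 / (m + j n)`.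
If `m > k`, or if `n > 2k`, the terms are so large that `S / P` lies strictly between two
consecutive integers (`0` and `1`, or `1` and `2` when `m = 1`), which discreteness forbids.
Otherwise `m ≤ k` and `n ≤ 2k` are natural numbers, and it remains to show `P ∤ S` in `ℕ`.
After dividing by `gcd m n`, it suffices to find a prime `p` for which exactly one term has
maximal `p`-adic valuation, and that valuation is positive: then `v_p(P) > v_p(S)`.
For odd `n` take `p = 2`: two maximal terms are a multiple of `2 ^ E` apart, and the term
`2 ^ E` after the first one has larger valuation. For even `n`, any prime `p` works whose highest
power `p ^ e` dividing a term exceeds `k`, since terms divisible by `p ^ e` are `p ^ e` apart.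
Such a prime exists: for `n = 2` by Bertrand's postulate, and for `n ≥ 4` because otherwise a
Legendre-type count bounds the (odd) product `P` by `k! · 4 ^ k · 2 ^ (k / 2) / 2 ^ v₂(k!)`,
which is at most `k! · 4 ^ k < P`.
-/

open Finset Nat

namespace Nagell

section Semiring

variable {R : Type*} [CommSemiring R]

def num (k : ℕ) (m n : R) : R :=
  ∑ i ∈ range (k + 1), ∏ j ∈ (range (k + 1)).erase i, (m + (j : R) * n)

def den (k : ℕ) (m n : R) : R :=
  ∏ j ∈ range (k + 1), (m + (j : R) * n)

@[simp, norm_cast]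
theorem cast_num (k m n : ℕ) : ((num k m n : ℕ) : R) = num k (m : R) n := by
  simp [num]

@[simp, norm_cast]
theorem cast_den (k m n : ℕ) : ((den k m n : ℕ) : R) = den k (m : R) n := by
  simp [den]

theorem num_mul_right (k : ℕ) (m n d : R) : num k (m * d) (n * d) = d ^ k * num k m n := by
  simp_rw [num, mul_sum, ← mul_assoc, ← add_mul, prod_mul_distrib, prod_const]
  refine sum_congr rfl fun i hi => ?_
  rw [card_erase_of_mem hi, card_range, Nat.add_sub_cancel, mul_comm]

theorem den_mul_right (k : ℕ) (m n d : R) : den k (m * d) (n * d) = d ^ (k + 1) * den k m n := by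
  simp_rw [den, ← mul_assoc, ← add_mul, prod_mul_distrib, prod_const, card_range, mul_comm]

end Semiring

section OrderedSemiring

variable {R : Type*} [CommSemiring R] [PartialOrder R] [IsStrictOrderedRing R] {k : ℕ} {m n : R}

theorem add_mul_pos (hm : 0 < m) (hn : 0 ≤ n) (j : ℕ) : 0 < m + j * n :=
  add_pos_of_pos_of_nonneg hm (mul_nonneg j.cast_nonneg hn)

theorem den_pos (hm : 0 < m) (hn : 0 ≤ n) : 0 < den k m n :=
  prod_pos fun j _ => add_mul_pos hm hn j

theorem num_pos (hm : 0 < m) (hn : 0 ≤ n) : 0 < num k m n :=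
  sum_pos (fun _ _ => prod_pos fun j _ => add_mul_pos hm hn j) nonempty_range_add_one

end OrderedSemiring

theorem not_prod_dvd_sum_prod_erase {ι : Type*} [DecidableEq ι] {s : Finset ι} {a : ι → ℕ}
    (ha : ∀ j ∈ s, a j ≠ 0) {p : ℕ} (hp : p.Prime) {i₀ : ι} (hi₀ : i₀ ∈ s) (hdvd : p ∣ a i₀)
    (hmax : ∀ i ∈ s, i ≠ i₀ → (a i).factorization p < (a i₀).factorization p) :
    ¬ ∏ j ∈ s, a j ∣ ∑ i ∈ s, ∏ j ∈ s.erase i, a j := by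
  have hne : ∀ i, ∏ j ∈ s.erase i, a j ≠ 0 :=
    fun i => prod_ne_zero_iff.mpr fun j hj => ha j (mem_of_mem_erase hj)
  have hsplit : ∀ i ∈ s, (∏ j ∈ s, a j).factorization p =
      (∏ j ∈ s.erase i, a j).factorization p + (a i).factorization p := fun i hi => by
    rw [← mul_prod_erase s a hi, Nat.factorization_mul (ha i hi) (hne i), Finsupp.add_apply,
      add_comm]
  set T := (∏ j ∈ s.erase i₀, a j).factorization p
  have hfull : p ^ (T + 1) ∣ ∏ j ∈ s, a j := by
    rw [hp.pow_dvd_iff_le_factorization (prod_ne_zero_iff.mpr ha), hsplit i₀ hi₀]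
    have := (hp.dvd_iff_one_le_factorization (ha i₀ hi₀)).mp hdvd
    omega
  have hothers : p ^ (T + 1) ∣ ∑ i ∈ s.erase i₀, ∏ j ∈ s.erase i, a j :=
    dvd_sum fun i hi => by
      have hi' := mem_of_mem_erase hi
      rw [hp.pow_dvd_iff_le_factorization (hne i)]
      have := hsplit i hi'
      have := hsplit i₀ hi₀
      have := hmax i hi' (ne_of_mem_erase hi)
      omega
  intro h
  rw [← add_sum_erase s _ hi₀] at h
  exact Nat.pow_succ_factorization_not_dvd (hne i₀) hp <|
    (Nat.dvd_add_left hothers).mp (hfull.trans h)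

section Natural

variable {k m n p : ℕ}

theorem den_nat_eq (k m n : ℕ) : den k m n = ∏ j ∈ range (k + 1), (m + j * n) := by
  simp [den]

theorem num_nat_eq (k m n : ℕ) :
    num k m n = ∑ i ∈ range (k + 1), ∏ j ∈ (range (k + 1)).erase i, (m + j * n) := by
  simp [num]

theorem add_le_of_dvd_of_dvd {q i i' : ℕ} (hq : q.Coprime n) (hi : q ∣ m + i * n)
    (hi' : q ∣ m + i' * n) (hlt : i < i') : i + q ≤ i' := by
  obtain ⟨d, rfl⟩ := Nat.exists_eq_add_of_lt hlt
  rw [show m + (i + d + 1) * n = m + i * n + (d + 1) * n by ring] at hi'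
  have := Nat.le_of_dvd d.succ_pos (hq.dvd_of_dvd_mul_right ((Nat.dvd_add_right hi).mp hi'))
  omega

theorem coprime_of_dvd_add_mul (hco : m.Coprime n) {q j : ℕ} (hq : q ∣ m + j * n) :
    q.Coprime n :=
  Nat.Coprime.coprime_dvd_left hq ((Nat.coprime_add_mul_right_left m n j).mpr hco)

def maxVal (k m n p : ℕ) : ℕ :=
  (range (k + 1)).sup fun j => (m + j * n).factorization p

theorem factorization_le_maxVal {j : ℕ} (hj : j ≤ k) :
    (m + j * n).factorization p ≤ maxVal k m n p :=
  le_sup (f := fun j => (m + j * n).factorization p) (mem_range.mpr (Nat.lt_succ_of_le hj))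

theorem exists_factorization_eq_maxVal (k m n p : ℕ) :
    ∃ j ≤ k, (m + j * n).factorization p = maxVal k m n p := by
  obtain ⟨j, hj, hjmax⟩ := exists_mem_eq_sup (range (k + 1)) nonempty_range_add_one
    fun j => (m + j * n).factorization p
  exact ⟨j, Nat.le_of_lt_succ (mem_range.mp hj), hjmax.symm⟩

theorem not_den_dvd_num_of_maxVal_attained_once (hm : 0 < m) (hp : p.Prime)
    (hpos : 0 < maxVal k m n p)
    (honce : ∀ i i', i < i' → i' ≤ k → (m + i * n).factorization p = maxVal k m n p →
      (m + i' * n).factorization p ≠ maxVal k m n p) :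
    ¬ den k m n ∣ num k m n := by
  obtain ⟨i₀, hi₀k, hi₀⟩ := exists_factorization_eq_maxVal k m n p
  rw [den_nat_eq, num_nat_eq]
  refine not_prod_dvd_sum_prod_erase (fun j _ => by omega) hp (i₀ := i₀)
    (mem_range.mpr (by omega)) ((hp.dvd_iff_one_le_factorization (by omega)).mpr (by omega))
    fun i hi hne => ?_
  have hik : i ≤ k := Nat.le_of_lt_succ (mem_range.mp hi)
  rw [hi₀]
  refine lt_of_le_of_ne (factorization_le_maxVal hik) fun hieq => ?_
  rcases lt_or_gt_of_ne hne with hlt | hlt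
  · exact honce i i₀ hlt hi₀k hieq hi₀
  · exact honce i₀ i hlt hik hi₀ hieq

theorem not_den_dvd_num_of_lt_pow_maxVal (hk : 0 < k) (hm : 0 < m) (hco : m.Coprime n)
    (hp : p.Prime) (hlt : k < p ^ maxVal k m n p) : ¬ den k m n ∣ num k m n := by
  set E := maxVal k m n p
  have hpos : 0 < E := by
    by_contra h
    rw [Nat.eq_zero_of_not_pos h, pow_zero] at hlt
    omega
  have hdvd : ∀ j, (m + j * n).factorization p = E → p ^ E ∣ m + j * n :=
    fun j hj => (hp.pow_dvd_iff_le_factorization (by omega)).mpr hj.ge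
  obtain ⟨j, -, hj⟩ := exists_factorization_eq_maxVal k m n p
  have hcop : (p ^ E).Coprime n := coprime_of_dvd_add_mul hco (hdvd j hj)
  refine not_den_dvd_num_of_maxVal_attained_once hm hp hpos fun i i' hii' hi'k hi hi' => ?_
  have := add_le_of_dvd_of_dvd hcop (hdvd i hi) (hdvd i' hi') hii'
  omega

theorem two_pow_succ_dvd_add_two_pow_mul {a E : ℕ} (ha : 2 ^ E ∣ a) (ha' : ¬ 2 ^ (E + 1) ∣ a)
    (hn : Odd n) : 2 ^ (E + 1) ∣ a + 2 ^ E * n := by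
  obtain ⟨u, rfl⟩ := ha
  have hu : Odd u := Nat.not_even_iff_odd.mp fun ⟨v, hv⟩ =>
    ha' ⟨v, by rw [hv, pow_succ]; ring⟩
  obtain ⟨w, hw⟩ := (hu.add_odd hn).two_dvd
  exact ⟨w, by rw [← mul_add, hw, pow_succ, mul_assoc]⟩

theorem not_den_dvd_num_of_odd (hk : 0 < k) (hm : 0 < m) (hn : Odd n) :
    ¬ den k m n ∣ num k m n := by
  have hpos : 0 < maxVal k m n 2 := by
    obtain ⟨j, hjk, hj⟩ : ∃ j ≤ k, 2 ∣ m + j * n := by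
      rcases Nat.even_or_odd m with hme | hmo
      · exact ⟨0, by omega, by simpa using hme.two_dvd⟩
      · exact ⟨1, hk, by simpa using (hmo.add_odd hn).two_dvd⟩
    exact lt_of_lt_of_le ((Nat.prime_two.dvd_iff_one_le_factorization (by omega)).mp hj)
      (factorization_le_maxVal hjk)
  refine not_den_dvd_num_of_maxVal_attained_once hm Nat.prime_two hpos
    fun i i' hii' hi'k hi hi' => ?_
  set E := maxVal k m n 2
  have hdvd : ∀ j, (m + j * n).factorization 2 = E → 2 ^ E ∣ m + j * n :=
    fun j hj => (Nat.prime_two.pow_dvd_iff_le_factorization (by omega)).mpr hj.ge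
  have hcop : (2 ^ E).Coprime n := Nat.Coprime.pow_left E (Nat.coprime_two_left.mpr hn)
  have hle := add_le_of_dvd_of_dvd hcop (hdvd i hi) (hdvd i' hi') hii'
  have hnot : ¬ 2 ^ (E + 1) ∣ m + i * n :=
    hi ▸ Nat.pow_succ_factorization_not_dvd (by omega) Nat.prime_two
  have hnext : 2 ^ (E + 1) ∣ m + (i + 2 ^ E) * n := by
    rw [show m + (i + 2 ^ E) * n = m + i * n + 2 ^ E * n by ring]
    exact two_pow_succ_dvd_add_two_pow_mul (hdvd i hi) hnot hn
  have := (Nat.prime_two.pow_dvd_iff_le_factorization (by omega)).mp hnext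
  have := factorization_le_maxVal (k := k) (m := m) (n := n) (p := 2) (j := i + 2 ^ E) (by omega)
  omega

theorem card_filter_dvd_le {q : ℕ} (hq : q.Coprime n) (hq0 : 0 < q) :
    #{j ∈ range (k + 1) | q ∣ m + j * n} ≤ k / q + 1 := by
  rw [← card_range (k / q + 1)]
  refine card_le_card_of_injOn (· / q) (fun j hj => ?_) fun i hi i' hi' heq => ?_
  · simp only [coe_filter, mem_range, Set.mem_ofPred_eq, coe_range, Set.mem_Iio] at hj ⊢
    exact Nat.lt_succ_of_le (Nat.div_le_div_right (by omega))
  · simp only [coe_filter, mem_range, Set.mem_ofPred_eq] at hi hi'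
    have hsep : ∀ j j', j < j' → q ∣ m + j * n → q ∣ m + j' * n → j / q < j' / q :=
      fun j j' hjj' hj hj' => calc
        j / q < (j + q) / q := by rw [Nat.add_div_right j hq0]; omega
        _ ≤ j' / q := Nat.div_le_div_right (add_le_of_dvd_of_dvd hq hj hj' hjj')
    by_contra hne
    rcases lt_or_gt_of_ne hne with hlt | hlt
    · exact (hsep i i' hlt hi.2 hi'.2).ne heq
    · exact (hsep i' i hlt hi'.2 hi.2).ne' heq

theorem factorization_den_le (hm : 0 < m) (hp : p.Prime) (hpn : ¬ p ∣ n) :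
    (den k m n).factorization p ≤ (k !).factorization p + maxVal k m n p := by
  set E := maxVal k m n p
  have hval : ∀ j ∈ range (k + 1),
      (m + j * n).factorization p = #{t ∈ Icc 1 E | p ^ t ∣ m + j * n} := fun j hj => by
    have hE := factorization_le_maxVal (m := m) (n := n) (p := p)
      (Nat.le_of_lt_succ (mem_range.mp hj))
    have : {t ∈ Icc 1 E | p ^ t ∣ m + j * n} = Icc 1 ((m + j * n).factorization p) := by
      ext t
      simp only [mem_Icc, mem_filter, hp.pow_dvd_iff_le_factorization (by omega : m + j * n ≠ 0)]
      omega
    rw [this, Nat.card_Icc, Nat.add_sub_cancel]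
  have hcount : ∀ t ∈ Icc 1 E, #{j ∈ range (k + 1) | p ^ t ∣ m + j * n} ≤ k / p ^ t + 1 :=
    fun t _ => card_filter_dvd_le
      (Nat.Coprime.pow_left t ((Nat.Prime.coprime_iff_not_dvd hp).mpr hpn)) (pow_pos hp.pos t)
  calc (den k m n).factorization p
      = ∑ j ∈ range (k + 1), (m + j * n).factorization p := by
        rw [den_nat_eq, Nat.factorization_prod fun j _ => by omega, Finsupp.finsetSum_apply]
    _ = ∑ t ∈ Icc 1 E, #{j ∈ range (k + 1) | p ^ t ∣ m + j * n} := by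
        rw [sum_congr rfl hval]
        exact sum_card_bipartiteAbove_eq_sum_card_bipartiteBelow fun j t => p ^ t ∣ m + j * n
    _ ≤ ∑ t ∈ Icc 1 E, (k / p ^ t + 1) := sum_le_sum hcount
    _ = ∑ t ∈ Ico 1 (E + 1), k / p ^ t + E := by
        rw [sum_add_distrib, sum_const, Nat.card_Icc, smul_eq_mul, mul_one, Nat.add_sub_cancel]
        rfl
    _ ≤ ∑ t ∈ Ico 1 (E + 1 + log p k), k / p ^ t + E :=
        Nat.add_le_add_right (sum_le_sum_of_subset (Ico_subset_Ico_right (by omega))) E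
    _ = (k !).factorization p + E := by
        rw [Nat.factorization_factorial hp (b := E + 1 + log p k) (by omega)]

theorem pow_mul_factorial_lt_den (hk : 0 < k) (hm : 0 < m) (hn : 0 < n) :
    n ^ k * k ! < den k m n := by
  have hprod : n ^ k * k ! = ∏ j ∈ range k, (j + 1) * n := by
    rw [prod_mul_distrib, prod_const, card_range, prod_range_add_one_eq_factorial, mul_comm]
  rw [hprod, den_nat_eq, prod_range_succ']
  calc ∏ j ∈ range k, (j + 1) * n
      < ∏ j ∈ range k, (m + (j + 1) * n) :=
        prod_lt_prod_of_nonempty (fun j _ => by positivity) (fun j _ => by omega)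
          (nonempty_range_iff.mpr hk.ne')
    _ ≤ (∏ j ∈ range k, (m + (j + 1) * n)) * (m + 0 * n) :=
        Nat.le_mul_of_pos_right _ (by omega)

theorem div_two_le_factorization_two_factorial (k : ℕ) : k / 2 ≤ (k !).factorization 2 := by
  rw [Nat.factorization_factorial Nat.prime_two (show log 2 k < log 2 k + 2 by omega)]
  exact single_le_sum (f := fun t => k / 2 ^ t) (fun _ _ => Nat.zero_le _)
    (show 1 ∈ Ico 1 (log 2 k + 2) by simp)

theorem succ_sq_le_three_mul_two_pow (s : ℕ) : (s + 1) ^ 2 ≤ 3 * 2 ^ s + 1 := by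
  induction s with
  | zero => norm_num
  | succ s ih =>
    have : s < 2 ^ s := Nat.lt_two_pow_self
    rw [pow_succ 2 s]
    nlinarith

def oddPrimes (k : ℕ) : Finset ℕ := {p ∈ range (k + 1) | p.Prime ∧ p ≠ 2}

-- The odd part of `lcm (1, …, k)`.
def oddPrimePowProd (k : ℕ) : ℕ := ∏ p ∈ oddPrimes k, p ^ log p k

theorem mem_oddPrimes {p : ℕ} : p ∈ oddPrimes k ↔ p ≤ k ∧ p.Prime ∧ p ≠ 2 := by
  simp [oddPrimes]

theorem oddPrimePowProd_pos (k : ℕ) : 0 < oddPrimePowProd k :=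
  prod_pos fun _ hp => pow_pos (mem_oddPrimes.mp hp).2.1.pos _

theorem factorization_oddPrimePowProd {q : ℕ} (hq : q.Prime) (hq2 : q ≠ 2) :
    (oddPrimePowProd k).factorization q = log q k := by
  rw [oddPrimePowProd, Nat.factorization_prod fun p hp =>
    pow_ne_zero _ (mem_oddPrimes.mp hp).2.1.ne_zero, Finsupp.finsetSum_apply]
  simp_rw [Nat.factorization_pow, Finsupp.smul_apply, smul_eq_mul]
  rw [sum_eq_single q]
  · rw [hq.factorization_self, mul_one]
  · intro p hp hpq
    rw [(mem_oddPrimes.mp hp).2.1.factorization, Finsupp.single_eq_of_ne hpq.symm, mul_zero]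
  · intro hq'
    have hkq : k < q := by
      by_contra h
      exact hq' (mem_oddPrimes.mpr ⟨by omega, hq, hq2⟩)
    rw [log_of_lt hkq, zero_mul]

theorem prod_oddPrimes_le_four_pow (k : ℕ) : ∏ p ∈ oddPrimes k, p ≤ 4 ^ k :=
  calc ∏ p ∈ oddPrimes k, p ≤ primorial k :=
        prod_le_prod_of_subset_of_one_le' (fun p hp => by
          simp only [mem_filter, oddPrimes] at hp ⊢; exact ⟨hp.1, hp.2.1⟩)
          fun p hp _ => (mem_filter.mp hp).2.one_le
    _ ≤ 4 ^ k := primorial_le_four_pow k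

theorem card_oddPrimes_le (s : ℕ) : #(oddPrimes s) ≤ (s - 1) / 2 := by
  have hodd : ∀ p ∈ oddPrimes s, p % 2 = 1 ∧ 3 ≤ p ∧ p ≤ s := fun p hp => by
    obtain ⟨hps, hp, hp2⟩ := mem_oddPrimes.mp hp
    have := hp.two_le
    have := (hp.eq_two_or_odd).resolve_left hp2
    omega
  calc #(oddPrimes s) ≤ #(Icc 1 ((s - 1) / 2)) :=
        card_le_card_of_injOn (· / 2) (fun p hp => by
          have := hodd p hp
          simp only [coe_Icc, Set.mem_Icc]
          omega) fun p hp p' hp' h => by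
          have := hodd p hp
          have := hodd p' hp'
          simp only at h
          omega
    _ = (s - 1) / 2 := by simp

theorem prod_oddPrimes_pow_log_sub_one_le (k : ℕ) :
    ∏ p ∈ oddPrimes k, p ^ (log p k - 1) ≤ 2 ^ (k / 2) := by
  set s := Nat.sqrt k
  have hsk : s * s ≤ k := Nat.sqrt_le k
  have hks : k ≤ 3 * 2 ^ s := by
    have : k < (s + 1) ^ 2 := Nat.lt_succ_sqrt' k
    have := succ_sq_le_three_mul_two_pow s
    omega
  have hsub : oddPrimes s ⊆ oddPrimes k := fun p hp => by
    rw [mem_oddPrimes] at hp ⊢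
    exact ⟨hp.1.trans (Nat.sqrt_le_self k), hp.2⟩
  have hlarge : ∀ p ∈ oddPrimes k, p ∉ oddPrimes s → p ^ (log p k - 1) = 1 := fun p hp hps => by
    obtain ⟨-, hp, hp2⟩ := mem_oddPrimes.mp hp
    suffices log p k < 2 by rw [show log p k - 1 = 0 by omega, pow_zero]
    by_contra h
    refine hps (mem_oddPrimes.mpr ⟨Nat.le_sqrt'.mpr ?_, hp, hp2⟩)
    calc p ^ 2 ≤ p ^ log p k := Nat.pow_le_pow_right hp.pos (by omega)
      _ ≤ k := pow_log_le_self p (by rintro rfl; simp at h)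
  have hsmall : ∀ p ∈ oddPrimes s, p ^ (log p k - 1) ≤ 2 ^ s := fun p hp => by
    obtain ⟨hps, hp, hp2⟩ := mem_oddPrimes.mp (hsub hp)
    have h3 : 3 ≤ p := by have := hp.two_le; omega
    have := Nat.log_pos hp.one_lt hps
    have : p ^ (log p k - 1) * 3 ≤ k := calc
      p ^ (log p k - 1) * 3 ≤ p ^ (log p k - 1) * p ^ 1 := by gcongr; simpa using h3
      _ = p ^ log p k := by rw [← pow_add]; congr 1; omega
      _ ≤ k := pow_log_le_self p (by omega)
    omega
  have hexp : s * ((s - 1) / 2) ≤ k / 2 := by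
    have h1 : s * (2 * ((s - 1) / 2)) ≤ s * s := Nat.mul_le_mul_left s (by omega)
    have h2 : s * (2 * ((s - 1) / 2)) = 2 * (s * ((s - 1) / 2)) := by ring
    omega
  calc ∏ p ∈ oddPrimes k, p ^ (log p k - 1)
      = ∏ p ∈ oddPrimes s, p ^ (log p k - 1) := (prod_subset hsub hlarge).symm
    _ ≤ (2 ^ s) ^ #(oddPrimes s) := prod_le_pow_card _ _ _ hsmall
    _ ≤ (2 ^ s) ^ ((s - 1) / 2) := Nat.pow_le_pow_right (by positivity) (card_oddPrimes_le s)
    _ = 2 ^ (s * ((s - 1) / 2)) := (pow_mul 2 s _).symm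
    _ ≤ 2 ^ (k / 2) := Nat.pow_le_pow_right (by norm_num) hexp

theorem oddPrimePowProd_le (k : ℕ) : oddPrimePowProd k ≤ 4 ^ k * 2 ^ (k / 2) := by
  have hsplit : oddPrimePowProd k =
      (∏ p ∈ oddPrimes k, p) * ∏ p ∈ oddPrimes k, p ^ (log p k - 1) := by
    rw [oddPrimePowProd, ← prod_mul_distrib]
    refine prod_congr rfl fun p hp => ?_
    obtain ⟨hpk, hp, -⟩ := mem_oddPrimes.mp hp
    conv_lhs => rw [← Nat.sub_add_cancel (Nat.log_pos hp.one_lt hpk)]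
    rw [pow_succ']
  rw [hsplit]
  exact Nat.mul_le_mul (prod_oddPrimes_le_four_pow k) (prod_oddPrimes_pow_log_sub_one_le k)

theorem den_mul_two_pow_dvd (hm : Odd m) (hn : Even n) (hco : m.Coprime n)
    (hsmooth : ∀ p, p.Prime → p ^ maxVal k m n p ≤ k) :
    den k m n * 2 ^ (k !).factorization 2 ∣ k ! * oddPrimePowProd k := by
  have hden : den k m n ≠ 0 := (den_pos hm.pos (Nat.zero_le n)).ne'
  have hden_odd : ¬ 2 ∣ den k m n := by
    rw [den_nat_eq, Nat.prime_two.prime.dvd_finsetProd_iff]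
    rintro ⟨j, -, hj⟩
    exact Nat.not_even_iff_odd.mpr (hm.add_even (hn.mul_left j)) (even_iff_two_dvd.mpr hj)
  have hL : oddPrimePowProd k ≠ 0 := (oddPrimePowProd_pos k).ne'
  rw [← Nat.factorization_le_iff_dvd (by positivity) (by positivity)]
  intro q
  simp only [Nat.factorization_mul hden (pow_ne_zero _ two_ne_zero), Nat.factorization_mul
    (factorial_ne_zero k) hL, Nat.factorization_pow, Finsupp.add_apply, Finsupp.smul_apply,
    smul_eq_mul]
  by_cases hq : q.Prime
  swap
  · simp [Nat.factorization_eq_zero_of_not_prime _ hq]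
  by_cases hq2 : q = 2
  · subst hq2
    rw [Nat.factorization_eq_zero_of_not_dvd hden_odd, Nat.prime_two.factorization_self]
    omega
  rw [factorization_oddPrimePowProd hq hq2, Nat.prime_two.factorization,
    Finsupp.single_eq_of_ne hq2, mul_zero, add_zero]
  by_cases hqn : q ∣ n
  · rw [Nat.factorization_eq_zero_of_not_dvd]
    · exact Nat.zero_le _
    rw [den_nat_eq, hq.prime.dvd_finsetProd_iff]
    rintro ⟨j, -, hj⟩
    exact hq.one_lt.ne' ((coprime_of_dvd_add_mul hco hj).eq_one_of_dvd hqn)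
  · exact (factorization_den_le hm.pos hq hqn).trans
      (Nat.add_le_add_left (Nat.le_log_of_pow_le hq.one_lt (hsmooth q hq)) _)

theorem lt_four_of_pow_maxVal_le (hk : 0 < k) (hm : Odd m) (hn : Even n) (hn0 : 0 < n)
    (hco : m.Coprime n) (hsmooth : ∀ p, p.Prime → p ^ maxVal k m n p ≤ k) : n < 4 := by
  set v := (k !).factorization 2
  by_contra h4
  refine lt_irrefl (den k m n * 2 ^ v) ?_
  calc den k m n * 2 ^ v
      ≤ k ! * oddPrimePowProd k :=
        Nat.le_of_dvd (mul_pos (factorial_pos k) (oddPrimePowProd_pos k))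
          (den_mul_two_pow_dvd hm hn hco hsmooth)
    _ ≤ k ! * (4 ^ k * 2 ^ (k / 2)) := Nat.mul_le_mul_left _ (oddPrimePowProd_le k)
    _ ≤ k ! * (n ^ k * 2 ^ v) := by
        gcongr
        · omega
        · norm_num
        · exact div_two_le_factorization_two_factorial k
    _ = n ^ k * k ! * 2 ^ v := by ring
    _ < den k m n * 2 ^ v := by
        gcongr
        exact pow_mul_factorial_lt_den hk hm.pos hn0

theorem exists_lt_pow_maxVal_two (hk : 0 < k) (hm : Odd m) (hmk : m ≤ k) :
    ∃ p, p.Prime ∧ k < p ^ maxVal k m 2 p := by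
  obtain ⟨p, hp, hkp, hp2k⟩ := Nat.exists_prime_lt_and_le_two_mul (k + 1) (by omega)
  have hp_odd : p % 2 = 1 := hp.eq_two_or_odd.resolve_left (by omega)
  have hm_odd : m % 2 = 1 := Nat.odd_iff.mp hm
  have hv := factorization_le_maxVal (k := k) (m := m) (n := 2) (p := p) (j := (p - m) / 2)
    (by omega)
  rw [show m + (p - m) / 2 * 2 = p by omega, hp.factorization_self] at hv
  exact ⟨p, hp, lt_of_lt_of_le (by rw [pow_one]; omega) (Nat.pow_le_pow_right hp.pos hv)⟩

theorem not_den_dvd_num_of_coprime (hk : 0 < k) (hm : 0 < m) (hn : 0 < n) (hmk : m ≤ k)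
    (hco : m.Coprime n) : ¬ den k m n ∣ num k m n := by
  rcases Nat.even_or_odd n with hn_even | hn_odd
  · have hm_odd : Odd m := Nat.not_even_iff_odd.mp fun hm_even =>
      Nat.not_coprime_of_dvd_of_dvd one_lt_two hm_even.two_dvd hn_even.two_dvd hco
    obtain ⟨p, hp, hlt⟩ : ∃ p, p.Prime ∧ k < p ^ maxVal k m n p := by
      by_contra! hsmooth
      obtain rfl : n = 2 := by
        have := lt_four_of_pow_maxVal_le hk hm_odd hn_even hn hco hsmooth
        obtain ⟨r, rfl⟩ := hn_even
        omega
      obtain ⟨p, hp, hlt⟩ := exists_lt_pow_maxVal_two hk hm_odd hmk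
      exact (hsmooth p hp).not_gt hlt
    exact not_den_dvd_num_of_lt_pow_maxVal hk hm hco hp hlt
  · exact not_den_dvd_num_of_odd hk hm hn_odd

theorem not_den_dvd_num (hk : 0 < k) (hm : 0 < m) (hn : 0 < n) (hmk : m ≤ k) :
    ¬ den k m n ∣ num k m n := by
  obtain ⟨g, m', n', hg, hco, rfl, rfl⟩ := Nat.exists_coprime' (Nat.gcd_pos_of_pos_left n hm)
  rw [den_mul_right, num_mul_right, pow_succ, mul_assoc,
    mul_dvd_mul_iff_left (pow_ne_zero k hg.ne')]
  exact fun h => not_den_dvd_num_of_coprime hk (Nat.pos_of_mul_pos_right hm)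
    (Nat.pos_of_mul_pos_right hn) ((Nat.le_mul_of_pos_right m' hg).trans hmk) hco
    (dvd_of_mul_left_dvd h)

end Natural

theorem one_le_of_pos {R : Type*} [Zero R] [One R] [LinearOrder R]
    (hdisc : ¬ ∃ x : R, 0 < x ∧ x < 1) {x : R} (hx : 0 < x) : 1 ≤ x :=
  not_lt.mp fun h => hdisc ⟨x, hx, h⟩

section DiscretelyOrderedRing

variable {R : Type*} [CommRing R] [LinearOrder R] [IsStrictOrderedRing R]

theorem add_one_le_of_lt (hdisc : ¬ ∃ x : R, 0 < x ∧ x < 1) {a b : R} (h : a < b) :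
    a + 1 ≤ b := by
  linarith [one_le_of_pos hdisc (sub_pos.mpr h)]

theorem exists_natCast_eq_of_le (hdisc : ¬ ∃ x : R, 0 < x ∧ x < 1) {x : R} (hx : 0 ≤ x)
    (c : ℕ) (hxc : x ≤ c) : ∃ j : ℕ, x = j := by
  induction c with
  | zero => exact ⟨0, by push_cast at hxc ⊢; exact le_antisymm hxc hx⟩
  | succ c ih =>
    rcases le_or_gt x c with h | h
    · exact ih h
    · have := add_one_le_of_lt hdisc h
      push_cast at hxc
      exact ⟨c + 1, by push_cast; linarith⟩

theorem ne_mul_of_mem_Ioo (hdisc : ¬ ∃ x : R, 0 < x ∧ x < 1) {P S q : R} (hP : 0 < P)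
    (hS : S ∈ Set.Ioo (q * P) ((q + 1) * P)) (p : R) : S ≠ p * P := by
  rintro rfl
  have hlo := lt_of_mul_lt_mul_right hS.1 hP.le
  have hhi := lt_of_mul_lt_mul_right hS.2 hP.le
  linarith [add_one_le_of_lt hdisc hlo]

theorem mul_sum_prod_erase_lt {ι : Type*} [DecidableEq ι] {s t : Finset ι} (hts : t ⊆ s)
    {a : ι → R} (ha : ∀ i ∈ s, 0 < a i) {c : R} (hle : ∀ i ∈ t, c ≤ a i) {i₀ : ι}
    (hi₀ : i₀ ∈ t) (hlt : c < a i₀) :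
    c * ∑ i ∈ t, ∏ j ∈ s.erase i, a j < #t * ∏ j ∈ s, a j := by
  have hB : ∀ i, 0 < ∏ j ∈ s.erase i, a j :=
    fun i => prod_pos fun j hj => ha j (mem_of_mem_erase hj)
  rw [mul_sum, ← nsmul_eq_mul, ← sum_const]
  refine sum_lt_sum (fun i hi => ?_) ⟨i₀, hi₀, ?_⟩
  · exact (mul_le_mul_of_nonneg_right (hle i hi) (hB i).le).trans_eq (mul_prod_erase s a (hts hi))
  · exact (mul_lt_mul_of_pos_right hlt (hB i₀)).trans_eq (mul_prod_erase s a (hts hi₀))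

theorem exists_num_mem_Ioo_natCast {k m n : ℕ} (hk : 0 < k) (hm : 0 < m) (hn : 0 < n)
    (hmk : m ≤ k) :
    ∃ q : ℕ, num k (m : R) n ∈ Set.Ioo (q * den k (m : R) n) ((q + 1) * den k (m : R) n) := by
  refine ⟨num k m n / den k m n, ?_, ?_⟩ <;> rw [← cast_num, ← cast_den]
  · exact_mod_cast lt_of_le_of_ne (Nat.div_mul_le_self _ _)
      fun h => not_den_dvd_num hk hm hn hmk (Dvd.intro_left _ h)
  · rw [mul_comm]
    exact_mod_cast Nat.lt_mul_div_succ _ (den_pos hm (Nat.zero_le n))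

variable {k : ℕ} {m n : R}

theorem exists_num_mem_Ioo_of_add_one_le (hk : 0 < k) (hn : 0 < n) (hm : (k : R) + 1 ≤ m) :
    ∃ q : ℕ, num k m n ∈ Set.Ioo (q * den k m n) ((q + 1) * den k m n) := by
  have hm0 : 0 < m := by linarith [(k.cast_nonneg : (0 : R) ≤ k)]
  have hkn : 0 < (k : R) * n := mul_pos (by exact_mod_cast hk) hn
  have := mul_sum_prod_erase_lt subset_rfl (fun j _ => add_mul_pos hm0 hn.le j)
    (c := (k : R) + 1)
    (fun i _ => hm.trans (le_add_of_nonneg_right (mul_nonneg i.cast_nonneg hn.le)))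
    (self_mem_range_succ k) (by linarith)
  rw [card_range, Nat.cast_add_one] at this
  refine ⟨0, ?_, ?_⟩
  · simpa using num_pos hm0 hn.le
  · rw [Nat.cast_zero, zero_add, one_mul]
    exact lt_of_mul_lt_mul_left this (by positivity)

theorem two_mul_sum_erase_zero_lt_den (hk : 0 < k) (hm : 0 < m) (hn : 2 * (k : R) + 1 ≤ n) :
    2 * ∑ i ∈ (range (k + 1)).erase 0, ∏ j ∈ (range (k + 1)).erase i, (m + j * n) <
      den k m n := by
  have hn0 : 0 < n := by linarith [(k.cast_nonneg : (0 : R) ≤ k)]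
  have hlarge : ∀ i ∈ (range (k + 1)).erase 0, 2 * (k : R) < m + i * n := fun i hi => by
    have : (1 : R) ≤ i := by exact_mod_cast Nat.one_le_iff_ne_zero.mpr (ne_of_mem_erase hi)
    nlinarith
  have := mul_sum_prod_erase_lt (erase_subset 0 _) (fun j _ => add_mul_pos hm hn0.le j)
    (fun i hi => (hlarge i hi).le) (mem_erase.mpr ⟨one_ne_zero, mem_range.mpr (by omega)⟩)
    (hlarge 1 (mem_erase.mpr ⟨one_ne_zero, mem_range.mpr (by omega)⟩))
  rw [show #((range (k + 1)).erase 0) = k by simp, mul_comm (2 : R), mul_assoc] at this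
  exact lt_of_mul_lt_mul_left this k.cast_nonneg

theorem exists_num_mem_Ioo_of_two_mul_add_one_le (hdisc : ¬ ∃ x : R, 0 < x ∧ x < 1)
    (hk : 0 < k) (hm : 0 < m) (hn : 2 * (k : R) + 1 ≤ n) :
    ∃ q : ℕ, num k m n ∈ Set.Ioo (q * den k m n) ((q + 1) * den k m n) := by
  have hn0 : 0 < n := by linarith [(k.cast_nonneg : (0 : R) ≤ k)]
  have h0 : 0 ∈ range (k + 1) := mem_range.mpr k.succ_pos
  set B := ∏ j ∈ (range (k + 1)).erase 0, (m + (j : R) * n)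
  set T := ∑ i ∈ (range (k + 1)).erase 0, ∏ j ∈ (range (k + 1)).erase i, (m + (j : R) * n)
  have hT : 2 * T < den k m n := two_mul_sum_erase_zero_lt_den hk hm hn
  have hT0 : 0 < T := sum_pos (fun i _ => prod_pos fun j _ => add_mul_pos hm hn0.le j)
    ⟨1, mem_erase.mpr ⟨one_ne_zero, mem_range.mpr (by omega)⟩⟩
  have hnum : num k m n = B + T := (add_sum_erase _ _ h0).symm
  have hB : m * B = den k m n := by
    simpa [den] using mul_prod_erase (range (k + 1)) (fun j => m + (j : R) * n) h0
  rcases (one_le_of_pos hdisc hm).eq_or_lt with rfl | hm1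
  · refine ⟨1, ?_, ?_⟩ <;> push_cast <;> linarith
  · have hm2 : 2 ≤ m := by linarith [add_one_le_of_lt hdisc hm1]
    have hB0 : 0 < B := prod_pos fun j _ => add_mul_pos hm hn0.le j
    refine ⟨0, ?_, ?_⟩ <;> push_cast <;> nlinarith

end DiscretelyOrderedRing

end Nagell

theorem nagell_in_discretely_ordered_ring_general
    {R : Type*} [CommRing R] [LinearOrder R] [IsStrictOrderedRing R]
    (hdisc : ¬ ∃ x : R, 0 < x ∧ x < 1)
    (k : ℕ) (hk : 1 ≤ k)
    (m n p : R) (hm : 0 < m) (hn : 0 < n) :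
    ∑ i ∈ Finset.range (k + 1),
        ∏ j ∈ (Finset.range (k + 1)).erase i, (m + (j : R) * n)
      ≠ p * ∏ j ∈ Finset.range (k + 1), (m + (j : R) * n) := by
  obtain ⟨q, hq⟩ : ∃ q : ℕ, Nagell.num k m n ∈
      Set.Ioo (q * Nagell.den k m n) ((q + 1) * Nagell.den k m n) := by
    rcases lt_or_ge (2 * (k : R)) n with hn_large | hn_small
    · exact Nagell.exists_num_mem_Ioo_of_two_mul_add_one_le hdisc hk hm
        (Nagell.add_one_le_of_lt hdisc hn_large)
    rcases lt_or_ge (k : R) m with hm_large | hm_small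
    · exact Nagell.exists_num_mem_Ioo_of_add_one_le hk hn
        (Nagell.add_one_le_of_lt hdisc hm_large)
    obtain ⟨m, rfl⟩ := Nagell.exists_natCast_eq_of_le hdisc hm.le k hm_small
    obtain ⟨n, rfl⟩ :=
      Nagell.exists_natCast_eq_of_le hdisc hn.le (2 * k) (by push_cast; exact hn_small)
    exact Nagell.exists_num_mem_Ioo_natCast hk (by exact_mod_cast hm) (by exact_mod_cast hn)
      (by exact_mod_cast hm_small)
  exact Nagell.ne_mul_of_mem_Ioo hdisc (Nagell.den_pos hm hn.le) hq p

theorem nagell_in_discretely_ordered_ring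
    {R : Type*} [CommRing R] [LinearOrder R] [IsStrictOrderedRing R]
    (hdisc : ¬ ∃ x : R, 0 < x ∧ x < 1)
    (k : ℕ) (hk : 1 ≤ k)
    (m n p : R) (hm : 0 < m) (hn : 0 < n) (hp : 0 ≤ p) :
    ∑ i ∈ Finset.range (k + 1),
        ∏ j ∈ (Finset.range (k + 1)).erase i, (m + (j : R) * n)
      ≠ p * ∏ j ∈ Finset.range (k + 1), (m + (j : R) * n) :=
  nagell_in_discretely_ordered_ring_general hdisc k hk m n p hm hn
end
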